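/- Suppose G is bounded below with infimum G*, the constant step size satisfies 0 < α < 2/(L·σ²), and set κ = (α/n)·(1 − L·α·σ²/2) > 0. Then for every sequence of batches B_0, B_1, …, iterates θ_{t+1} = U(θ_t, B_t, α), and every horizon T ≥ 1, there exists a time step τ with 0 ≤ τ ≤ T−1 such that T(θ_τ, B_τ) ≤ (G(θ_0) − G*) / (κ·T). -/

import Mathlib

/-!
Each reweighted step moves along `-(α/n) ∑ cₖ gₖ` with `cₖ = max ⟪∇G θ, gₖ⟫ 0`. Since
`cₖ ⟪∇G θ, gₖ⟫ = cₖ²`, the first-order decrease of `G` is `(α/n) ∑ cₖ²`, while by the triangle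
and Cauchy–Schwarz inequalities `‖∑ cₖ gₖ‖² ≤ σ² n ∑ cₖ²`. The descent lemma for the
`L`-smooth `G` therefore gives `G θₜ₊₁ ≤ G θₜ - κ T(θₜ, Bₜ)`; telescoping over `T` steps and
`G ≥ G*` bound the sum of the `T(θₜ, Bₜ)` by `(G θ₀ - G*)/κ`, so the smallest one is at most
the average.
-/

open scoped RealInnerProductSpace

section Descent

variable {E : Type*} [NormedAddCommGroup E] [InnerProductSpace ℝ E] [CompleteSpace E]
  {G : E → ℝ} {L : ℝ}

lemma hasDerivAt_comp_add_smul (hG : Differentiable ℝ G) (x v : E) (t : ℝ) :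
    HasDerivAt (fun t : ℝ => G (x + t • v)) ⟪gradient G (x + t • v), v⟫ t := by
  have hline : HasDerivAt (fun t : ℝ => x + t • v) v t := by
    simpa using ((hasDerivAt_id t).smul_const v).const_add x
  exact (hasGradientAt_iff_hasFDerivAt.mp (hG _).hasGradientAt).comp_hasDerivAt t hline

lemma inner_gradient_add_smul_sub_le
    (hGL : ∀ x y, ‖gradient G x - gradient G y‖ ≤ L * ‖x - y‖) (x v : E) {t : ℝ} (ht : 0 ≤ t) :
    ⟪gradient G (x + t • v) - gradient G x, v⟫ ≤ L * t * ‖v‖ ^ 2 :=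
  calc ⟪gradient G (x + t • v) - gradient G x, v⟫
      ≤ ‖gradient G (x + t • v) - gradient G x‖ * ‖v‖ := real_inner_le_norm _ _
    _ ≤ L * ‖x + t • v - x‖ * ‖v‖ := by gcongr; exact hGL _ _
    _ = L * t * ‖v‖ ^ 2 := by
      rw [add_sub_cancel_left, norm_smul, Real.norm_of_nonneg ht]; ring

lemma le_add_inner_gradient_add_sq_norm (hG : Differentiable ℝ G)
    (hGL : ∀ x y, ‖gradient G x - gradient G y‖ ≤ L * ‖x - y‖) (x y : E) :
    G y ≤ G x + ⟪gradient G x, y - x⟫ + L / 2 * ‖y - x‖ ^ 2 := by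
  set v := y - x
  -- `ψ` has derivative `⟪∇G(x + t v) - ∇G x, v⟫ - L t ‖v‖² ≤ 0` on `[0, 1]`.
  let ψ : ℝ → ℝ := fun t => G (x + t • v) - t * ⟪gradient G x, v⟫ - L / 2 * ‖v‖ ^ 2 * t ^ 2
  have hψ : ∀ t, HasDerivAt ψ
      (⟪gradient G (x + t • v), v⟫ - ⟪gradient G x, v⟫ - L / 2 * ‖v‖ ^ 2 * (2 * t)) t := by
    intro t
    have h := ((hasDerivAt_comp_add_smul hG x v t).sub
      (hasDerivAt_mul_const ⟪gradient G x, v⟫)).sub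
      ((hasDerivAt_pow 2 t).const_mul (L / 2 * ‖v‖ ^ 2))
    rwa [Nat.cast_ofNat, pow_one] at h
  have hanti : AntitoneOn ψ (Set.Icc 0 1) := by
    refine antitoneOn_of_deriv_nonpos (convex_Icc 0 1)
      (fun t _ => (hψ t).continuousAt.continuousWithinAt)
      (fun t _ => (hψ t).differentiableAt.differentiableWithinAt) fun t ht => ?_
    rw [interior_Icc] at ht
    have := inner_gradient_add_smul_sub_le hGL x v ht.1.le
    rw [inner_sub_left] at this
    rw [(hψ t).deriv]
    linarith
  have h01 := hanti (Set.left_mem_Icc.mpr zero_le_one) (Set.right_mem_Icc.mpr zero_le_one)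
    zero_le_one
  simp only [ψ, v, zero_smul, add_zero, one_smul, add_sub_cancel] at h01
  linarith

end Descent

section ReweightedStep

variable {E ι : Type*} [NormedAddCommGroup E] [InnerProductSpace ℝ E] [Fintype ι]

lemma inner_sum_max_inner_zero_smul (p : E) (g : ι → E) :
    ⟪p, ∑ k, max ⟪p, g k⟫ 0 • g k⟫ = ∑ k, max ⟪p, g k⟫ 0 ^ 2 := by
  rw [inner_sum]
  refine Finset.sum_congr rfl fun k _ => ?_
  rw [real_inner_smul_right]
  rcases le_total ⟪p, g k⟫ 0 with h | h
  · simp [max_eq_right h]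
  · rw [max_eq_left h, sq]

lemma sq_norm_sum_smul_le {σ : ℝ} {c : ι → ℝ} (hc : ∀ k, 0 ≤ c k) {g : ι → E}
    (hg : ∀ k, ‖g k‖ ≤ σ) :
    ‖∑ k, c k • g k‖ ^ 2 ≤ σ ^ 2 * Fintype.card ι * ∑ k, c k ^ 2 := by
  have hnorm : ‖∑ k, c k • g k‖ ≤ σ * ∑ k, c k :=
    calc ‖∑ k, c k • g k‖ ≤ ∑ k, ‖c k • g k‖ := norm_sum_le _ _
      _ ≤ ∑ k, σ * c k := Finset.sum_le_sum fun k _ => by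
          rw [norm_smul, Real.norm_of_nonneg (hc k), mul_comm]
          exact mul_le_mul_of_nonneg_right (hg k) (hc k)
      _ = σ * ∑ k, c k := (Finset.mul_sum _ _ _).symm
  calc ‖∑ k, c k • g k‖ ^ 2 ≤ (σ * ∑ k, c k) ^ 2 := by gcongr
    _ = σ ^ 2 * (∑ k, c k) ^ 2 := mul_pow _ _ _
    _ ≤ σ ^ 2 * (Fintype.card ι * ∑ k, c k ^ 2) := by
        gcongr; simpa using sq_sum_le_card_mul_sum_sq (s := Finset.univ) (f := c)
    _ = σ ^ 2 * Fintype.card ι * ∑ k, c k ^ 2 := (mul_assoc _ _ _).symm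

lemma apply_sub_smul_sum_max_inner_le [CompleteSpace E] {G : E → ℝ} {L σ η : ℝ}
    (hG : Differentiable ℝ G) (hL : 0 ≤ L)
    (hGL : ∀ x y, ‖gradient G x - gradient G y‖ ≤ L * ‖x - y‖)
    {g : ι → E} (hg : ∀ k, ‖g k‖ ≤ σ) (hη : 0 ≤ η) (x : E) :
    G (x - η • ∑ k, max ⟪gradient G x, g k⟫ 0 • g k) ≤
      G x - η * (1 - L * η * σ ^ 2 * Fintype.card ι / 2) *
        ∑ k, max ⟪gradient G x, g k⟫ 0 ^ 2 := by
  set w := ∑ k, max ⟪gradient G x, g k⟫ 0 • g k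
  have hdesc := le_add_inner_gradient_add_sq_norm hG hGL x (x - η • w)
  have hinner : ⟪gradient G x, x - η • w - x⟫ = -(η * ∑ k, max ⟪gradient G x, g k⟫ 0 ^ 2) := by
    rw [sub_sub_cancel_left, inner_neg_right, real_inner_smul_right,
      inner_sum_max_inner_zero_smul]
  have hnorm : ‖x - η • w - x‖ ^ 2 ≤
      η ^ 2 * (σ ^ 2 * Fintype.card ι * ∑ k, max ⟪gradient G x, g k⟫ 0 ^ 2) := by
    rw [sub_sub_cancel_left, norm_neg, norm_smul, Real.norm_of_nonneg hη, mul_pow]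
    gcongr
    exact sq_norm_sum_smul_le (fun k => le_max_right _ _) hg
  have := mul_le_mul_of_nonneg_left hnorm (by positivity : 0 ≤ L / 2)
  rw [hinner] at hdesc
  linarith

end ReweightedStep

lemma exists_lt_le_div_of_descent {V a : ℕ → ℝ} {κ m : ℝ} (hκ : 0 < κ)
    (hstep : ∀ t, V (t + 1) ≤ V t - κ * a t) (hm : ∀ t, m ≤ V t) {T : ℕ} (hT : 1 ≤ T) :
    ∃ τ < T, a τ ≤ (V 0 - m) / (κ * T) := by
  have htele : ∀ s, κ * ∑ t ∈ Finset.range s, a t ≤ V 0 - V s := by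
    intro s
    induction s with
    | zero => simp
    | succ s ih => rw [Finset.sum_range_succ, mul_add]; linarith [hstep s]
  have hsum : ∑ t ∈ Finset.range T, a t ≤ ∑ _t ∈ Finset.range T, (V 0 - m) / (κ * T) :=
    calc ∑ t ∈ Finset.range T, a t ≤ (V 0 - m) / κ := by
          rw [le_div_iff₀' hκ]; linarith [htele T, hm T]
      _ = ∑ _t ∈ Finset.range T, (V 0 - m) / (κ * T) := by
          have hT' : (T : ℝ) ≠ 0 := by positivity
          rw [Finset.sum_const, Finset.card_range, nsmul_eq_mul]; field_simp
  obtain ⟨τ, hτ, hle⟩ := Finset.exists_le_of_sum_le ⟨0, Finset.mem_range.mpr hT⟩ hsum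
  exact ⟨τ, Finset.mem_range.mp hτ, hle⟩

theorem exists_step_small_T_general
    (d N M n : ℕ) (hn : 0 < n) (hMN : M ≤ N)
    (σ L : ℝ) (hL : 0 < L)
    (f : Fin N → EuclideanSpace ℝ (Fin d) → ℝ)
    (hf : ∀ i, ContDiff ℝ 1 (f i))
    (hfb : ∀ i x, ‖gradient (f i) x‖ ≤ σ)
    (G : EuclideanSpace ℝ (Fin d) → ℝ)
    (hG : ∀ θ, G θ = (1 / (M : ℝ)) * ∑ i : Fin M, f (Fin.castLE hMN i) θ)
    (hGL : ∀ x y, ‖gradient G x - gradient G y‖ ≤ L * ‖x - y‖)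
    (U : EuclideanSpace ℝ (Fin d) → (Fin n → Fin N) → ℝ → EuclideanSpace ℝ (Fin d))
    (hU : ∀ θ B α, U θ B α = θ - (α / (n : ℝ)) • ∑ k : Fin n,
        max ⟪gradient G θ, gradient (f (B k)) θ⟫ 0 • gradient (f (B k)) θ)
    (T : EuclideanSpace ℝ (Fin d) → (Fin n → Fin N) → ℝ)
    (hT : ∀ θ B, T θ B = ∑ k : Fin n, (max ⟪gradient G θ, gradient (f (B k)) θ⟫ 0) ^ 2)
    (Gstar : ℝ) (hGstar : IsGLB (Set.range G) Gstar)
    (α : ℝ) (hα : 0 < α)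
    (κ : ℝ) (hκ : κ = (α / (n : ℝ)) * (1 - L * α * σ ^ 2 / 2)) (hκpos : 0 < κ)
    (B : ℕ → (Fin n → Fin N))
    (θ : ℕ → EuclideanSpace ℝ (Fin d))
    (hθ : ∀ t, θ (t + 1) = U (θ t) (B t) α)
    (Thor : ℕ) (hThor : 1 ≤ Thor) :
    ∃ τ < Thor, T (θ τ) (B τ) ≤ (G (θ 0) - Gstar) / (κ * (Thor : ℝ)) := by
  have hGdiff : Differentiable ℝ G := by
    rw [funext hG]
    exact (Differentiable.fun_sum fun i _ =>
      (hf (Fin.castLE hMN i)).differentiable one_ne_zero).const_mul _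
  have hκ' : κ = α / n * (1 - L * (α / n) * σ ^ 2 * Fintype.card (Fin n) / 2) := by
    rw [hκ, Fintype.card_fin]; field_simp
  have hstep : ∀ t, G (θ (t + 1)) ≤ G (θ t) - κ * T (θ t) (B t) := fun t => by
    rw [hθ, hU, hT, hκ']
    exact apply_sub_smul_sum_max_inner_le hGdiff hL.le hGL (fun k => hfb _ _)
      (by positivity) _
  exact exists_lt_le_div_of_descent hκpos hstep (fun t => hGstar.1 ⟨θ t, rfl⟩) hThor

/-- STATEMENT 6: suppose `G` is bounded below with infimum `G*`, the constant step size
satisfies `0 < α < 2/(L·σ²)`, and set `κ = (α/n)·(1 − L·α·σ²/2) > 0`. Then for every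
sequence of batches, iterates `θ (t+1) = U (θ t) (B t) α`, and every horizon `T ≥ 1`,
there exists a time step `τ` with `0 ≤ τ ≤ T−1` such that
`T(θ_τ, B_τ) ≤ (G(θ_0) − G*) / (κ·T)`. -/
theorem exists_step_small_T
    (d N M n : ℕ) (hd : 0 < d) (hN : 0 < N) (hM : 0 < M) (hn : 0 < n) (hMN : M ≤ N)
    (σ L : ℝ) (hσ : 0 < σ) (hL : 0 < L)
    (f : Fin N → EuclideanSpace ℝ (Fin d) → ℝ)
    (hf : ∀ i, ContDiff ℝ 1 (f i))
    (hfb : ∀ i x, ‖gradient (f i) x‖ ≤ σ)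
    (G : EuclideanSpace ℝ (Fin d) → ℝ)
    (hG : ∀ θ, G θ = (1 / (M : ℝ)) * ∑ i : Fin M, f (Fin.castLE hMN i) θ)
    (hGL : ∀ x y, ‖gradient G x - gradient G y‖ ≤ L * ‖x - y‖)
    (U : EuclideanSpace ℝ (Fin d) → (Fin n → Fin N) → ℝ → EuclideanSpace ℝ (Fin d))
    (hU : ∀ θ B α, U θ B α = θ - (α / (n : ℝ)) • ∑ k : Fin n,
        max ⟪gradient G θ, gradient (f (B k)) θ⟫ 0 • gradient (f (B k)) θ)
    (T : EuclideanSpace ℝ (Fin d) → (Fin n → Fin N) → ℝ)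
    (hT : ∀ θ B, T θ B = ∑ k : Fin n, (max ⟪gradient G θ, gradient (f (B k)) θ⟫ 0) ^ 2)
    (Gstar : ℝ) (hGstar : IsGLB (Set.range G) Gstar)
    (α : ℝ) (hα : 0 < α) (hα' : α < 2 / (L * σ ^ 2))
    (κ : ℝ) (hκ : κ = (α / (n : ℝ)) * (1 - L * α * σ ^ 2 / 2)) (hκpos : 0 < κ)
    (B : ℕ → (Fin n → Fin N))
    (θ : ℕ → EuclideanSpace ℝ (Fin d))
    (hθ : ∀ t, θ (t + 1) = U (θ t) (B t) α)
    (Thor : ℕ) (hThor : 1 ≤ Thor) :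
    ∃ τ < Thor, T (θ τ) (B τ) ≤ (G (θ 0) - Gstar) / (κ * (Thor : ℝ)) :=
  exists_step_small_T_general d N M n hn hMN σ L hL f hf hfb G hG hGL U hU T hT Gstar hGstar α hα κ
    hκ hκpos B θ hθ Thor hThor
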